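/- Let G be a generic two-by-two game and let (ν,μ) be a mixed-strategy Nash equilibrium of G^Q. Then ν is equivalent to a Dirac measure concentrated at a single unit quaternion if and only if μ is equivalent to a Dirac measure concentrated at a single unit quaternion. -/

import Mathlib

noncomputable section

open MeasureTheory

local notation "ℍ" => Quaternion ℝ

instance : MeasurableSpace (Quaternion ℝ) := borel _
instance : BorelSpace (Quaternion ℝ) := ⟨rfl⟩

/-- The four real coordinates of a quaternion: `p = π₁(p) + π₂(p)i + π₃(p)j + π₄(p)k`. -/
def piQ (t : Fin 4) (p : ℍ) : ℝ := ![p.re, p.imI, p.imJ, p.imK] t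

/-- The standard inner product on ℍ ≅ ℝ⁴. -/
def qinner (p q : ℍ) : ℝ := ∑ t : Fin 4, piQ t p * piQ t q

/-- The quaternions `i`, `j`, `k`. -/
def qI : ℍ := ⟨0, 1, 0, 0⟩
def qJ : ℍ := ⟨0, 0, 1, 0⟩
def qK : ℍ := ⟨0, 0, 0, 1⟩

/-- A mixed quantum strategy: a Borel probability measure on the unit quaternions. -/
def IsMixed (μ : Measure ℍ) : Prop :=
  IsProbabilityMeasure μ ∧ μ {p : ℍ | ‖p‖ = 1} = 1

/-- Quantum payoff with payoff vector `X`: `P^Q(p,q) = Σ_t π_t(pq)² X_t`. -/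
def payoff (X : Fin 4 → ℝ) (p q : ℍ) : ℝ :=
  ∑ t : Fin 4, (piQ t (p * q)) ^ 2 * X t

/-- Expected payoff of a pair of mixed strategies. -/
def payoffM (X : Fin 4 → ℝ) (ν μ : Measure ℍ) : ℝ :=
  ∫ p, ∫ q, payoff X p q ∂μ ∂ν

/-- Mixed-strategy Nash equilibrium of the quantum game with payoff vectors `X`, `Y`. -/
def IsNash (X Y : Fin 4 → ℝ) (ν μ : Measure ℍ) : Prop :=
  IsMixed ν ∧ IsMixed μ ∧
    (∀ ν' : Measure ℍ, IsMixed ν' → payoffM X ν' μ ≤ payoffM X ν μ) ∧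
    (∀ μ' : Measure ℍ, IsMixed μ' → payoffM Y ν μ' ≤ payoffM Y ν μ)

/-- Equivalence of mixed quantum strategies. -/
def StratEquiv (μ μ' : Measure ℍ) : Prop :=
  ∀ p : ℍ, ‖p‖ = 1 → ∀ t : Fin 4,
    ∫ q, (piQ t (p * q)) ^ 2 ∂μ = ∫ q, (piQ t (p * q)) ^ 2 ∂μ'

/-- Equivalence of pairs of mixed strategies: `(ν,μ) ∼ (ν',μ')` iff there is a unit
quaternion `u` with `ν' ∼ ν·u` and `μ' ∼ u⁻¹·μ`. -/
def PairEquiv (ν μ ν' μ' : Measure ℍ) : Prop :=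
  ∃ u : ℍ, ‖u‖ = 1 ∧
    StratEquiv (Measure.map (fun p => p * u) ν) ν' ∧
    StratEquiv (Measure.map (fun q => u⁻¹ * q) μ) μ'

/-- A generic two-by-two game: all payoffs distinct and all pairwise sums distinct. -/
def Generic (X Y : Fin 4 → ℝ) : Prop :=
  Function.Injective X ∧ Function.Injective Y ∧
    (∀ s t s' t' : Fin 4, s < t → s' < t' → X s + X t = X s' + X t' → s = s' ∧ t = t') ∧
    (∀ s t s' t' : Fin 4, s < t → s' < t' → Y s + Y t = Y s' + Y t' → s = s' ∧ t = t')

/-- `K(p) = π₁(p)π₂(p)π₃(p)π₄(p)`. -/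
def K (p : ℍ) : ℝ := p.re * p.imI * p.imJ * p.imK

/-- Intertwined quadruple of quaternions. -/
def Intertwined (p q r s : ℍ) : Prop :=
  ∃ α : ℝ, α ≠ 0 ∧ ∀ X Y : ℝ, α * K (X • p + Y • q) = K (X • r + Y • s)

/-- Fully intertwined quadruple of quaternions. -/
def FullyIntertwined (p q r s : ℍ) : Prop :=
  Intertwined p q r s ∧ Intertwined p r q s

/-- `p` is an optimal response for Player One to the mixed strategy `μ`. -/
def Optimal₁ (X : Fin 4 → ℝ) (μ : Measure ℍ) (p : ℍ) : Prop :=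
  ‖p‖ = 1 ∧ ∀ p' : ℍ, ‖p'‖ = 1 → ∫ q, payoff X p' q ∂μ ≤ ∫ q, payoff X p q ∂μ

/-- `q` is an optimal response for Player Two to the mixed strategy `ν`. -/
def Optimal₂ (Y : Fin 4 → ℝ) (ν : Measure ℍ) (q : ℍ) : Prop :=
  ‖q‖ = 1 ∧ ∀ q' : ℍ, ‖q'‖ = 1 → ∫ p, payoff Y p q' ∂ν ≤ ∫ p, payoff Y p q ∂ν

/-! A strategy is equivalent to the Dirac measure at a unit quaternion `p` exactly when it is
concentrated on `{p, -p}`: testing the equivalence against `p⁻¹` and the real coordinate gives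
`∫ π₁(p⁻¹ r)² dν(r) = 1`, the maximum of `π₁²` on the unit sphere, which forces `p⁻¹ r = ±1`.

Against such a pure strategy `p`, Player Two's payoff is the diagonal quadratic form
`Σ_t π_t(p q)² Y_t`, which on unit quaternions is at most `max Y = Y_{t₀}`, with equality only
when `p q = ±e_{t₀}` (the basis quaternion) because the `Y_t` are distinct. The reply
`q₀ = p⁻¹ e_{t₀}` attains the maximum, so at an equilibrium `μ` must attain it almost surely,
i.e. `μ` is concentrated on `{q₀, -q₀}`.
The other direction is the mirror image, with right multiplication in place of left. -/

open Filter Function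

section MulIsometry

variable (𝕜 : Type*) {A : Type*} [NormedField 𝕜] [NormedDivisionRing A] [NormedAlgebra 𝕜 A]

def mulLeftIsometry (u : A) (hu : ‖u‖ = 1) : A ≃ₗᵢ[𝕜] A where
  toFun := (u * ·)
  invFun := (u⁻¹ * ·)
  map_add' := mul_add u
  map_smul' c x := mul_smul_comm c u x
  left_inv := inv_mul_cancel_left₀ (norm_ne_zero_iff.1 (by simp [hu]))
  right_inv := mul_inv_cancel_left₀ (norm_ne_zero_iff.1 (by simp [hu]))
  norm_map' x := by simp [hu]

def mulRightIsometry (u : A) (hu : ‖u‖ = 1) : A ≃ₗᵢ[𝕜] A where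
  toFun := (· * u)
  invFun := (· * u⁻¹)
  map_add' x y := add_mul x y u
  map_smul' c x := smul_mul_assoc c x u
  left_inv := mul_inv_cancel_right₀ (norm_ne_zero_iff.1 (by simp [hu]))
  right_inv := inv_mul_cancel_right₀ (norm_ne_zero_iff.1 (by simp [hu]))
  norm_map' x := by simp [hu]

@[simp]
lemma mulLeftIsometry_apply (u : A) (hu : ‖u‖ = 1) (x : A) :
    mulLeftIsometry 𝕜 u hu x = u * x := rfl

@[simp]
lemma mulRightIsometry_apply (u : A) (hu : ‖u‖ = 1) (x : A) :
    mulRightIsometry 𝕜 u hu x = x * u := rfl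

@[simp]
lemma mulLeftIsometry_symm_apply (u : A) (hu : ‖u‖ = 1) (x : A) :
    (mulLeftIsometry 𝕜 u hu).symm x = u⁻¹ * x := rfl

end MulIsometry

lemma exists_forall_ne_lt_of_injective {ι α : Type*} [Finite ι] [Nonempty ι] [LinearOrder α]
    {W : ι → α} (hW : Injective W) : ∃ t₀, ∀ t ≠ t₀, W t < W t₀ := by
  obtain ⟨t₀, ht₀⟩ := Finite.exists_max W
  exact ⟨t₀, fun t ht => (ht₀ t).lt_of_ne (hW.ne ht)⟩

def quatBasis : Fin 4 → ℍ := ![1, qI, qJ, qK]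

def quadForm (W : Fin 4 → ℝ) (x : ℍ) : ℝ := ∑ t : Fin 4, piQ t x ^ 2 * W t

lemma payoff_eq_quadForm (X : Fin 4 → ℝ) (p q : ℍ) : payoff X p q = quadForm X (p * q) := rfl

@[fun_prop]
lemma continuous_piQ (t : Fin 4) : Continuous (piQ t) := by
  fin_cases t
  exacts [Quaternion.continuous_re, Quaternion.continuous_imI, Quaternion.continuous_imJ,
    Quaternion.continuous_imK]

lemma piQ_neg (t : Fin 4) (x : ℍ) : piQ t (-x) = -piQ t x := by
  fin_cases t <;> rfl

lemma piQ_smul (t : Fin 4) (c : ℝ) (x : ℍ) : piQ t (c • x) = c * piQ t x := by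
  fin_cases t <;> rfl

lemma ext_piQ {x y : ℍ} (h : ∀ t, piQ t x = piQ t y) : x = y :=
  Quaternion.ext _ _ (h 0) (h 1) (h 2) (h 3)

lemma piQ_quatBasis (s t : Fin 4) : piQ s (quatBasis t) = if s = t then 1 else 0 := by
  fin_cases s <;> fin_cases t <;>
    simp [piQ, quatBasis, qI, qJ, qK, Quaternion.re_one, Quaternion.imI_one, Quaternion.imJ_one,
      Quaternion.imK_one]

lemma sum_piQ_sq (x : ℍ) : ∑ t, piQ t x ^ 2 = ‖x‖ ^ 2 := by
  rw [sq ‖x‖, ← Quaternion.normSq_eq_norm_mul_self, Quaternion.normSq_def']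
  simp [Fin.sum_univ_four, piQ]

lemma norm_quatBasis (t : Fin 4) : ‖quatBasis t‖ = 1 := by
  have h : ‖quatBasis t‖ ^ 2 = 1 := by simp [← sum_piQ_sq, piQ_quatBasis]
  exact (pow_eq_one_iff_of_nonneg (norm_nonneg _) two_ne_zero).1 h

lemma eq_quatBasis_or_neg_of_piQ_eq_zero {x : ℍ} (hx : ‖x‖ = 1) {t₀ : Fin 4}
    (h : ∀ t ≠ t₀, piQ t x = 0) : x = quatBasis t₀ ∨ x = -quatBasis t₀ := by
  have hx' : x = piQ t₀ x • quatBasis t₀ := ext_piQ fun t => by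
    rw [piQ_smul, piQ_quatBasis]
    split_ifs with ht
    · rw [ht, mul_one]
    · rw [h t ht, mul_zero]
  have hsq : piQ t₀ x ^ 2 = 1 := by
    rw [← one_pow 2, ← hx, ← sum_piQ_sq]
    exact (Fintype.sum_eq_single (f := fun t => piQ t x ^ 2) t₀ fun t ht => by
      rw [h t ht, sq, zero_mul]).symm
  rcases sq_eq_one_iff.1 hsq with h1 | h1
  · exact .inl (by rw [hx', h1, one_smul])
  · exact .inr (by rw [hx', h1, neg_one_smul])

lemma quadForm_neg (W : Fin 4 → ℝ) (x : ℍ) : quadForm W (-x) = quadForm W x := by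
  simp [quadForm, piQ_neg]

lemma quadForm_quatBasis (W : Fin 4 → ℝ) (t : Fin 4) : quadForm W (quatBasis t) = W t := by
  simp [quadForm, piQ_quatBasis]

lemma continuous_quadForm (W : Fin 4 → ℝ) : Continuous (quadForm W) := by
  unfold quadForm
  fun_prop

lemma sub_quadForm_eq_sum {x : ℍ} (hx : ‖x‖ = 1) (W : Fin 4 → ℝ) (t₀ : Fin 4) :
    W t₀ - quadForm W x = ∑ t, (W t₀ - W t) * piQ t x ^ 2 := by
  have h := sum_piQ_sq x
  rw [hx] at h
  simp only [quadForm, Fin.sum_univ_four] at h ⊢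
  linear_combination (-W t₀) * h

section StrictMax

variable {W : Fin 4 → ℝ} {t₀ : Fin 4} (hmax : ∀ t ≠ t₀, W t < W t₀)
include hmax

lemma sub_mul_piQ_sq_nonneg (t : Fin 4) (x : ℍ) : 0 ≤ (W t₀ - W t) * piQ t x ^ 2 := by
  refine mul_nonneg (sub_nonneg.2 ?_) (sq_nonneg _)
  rcases eq_or_ne t t₀ with rfl | ht
  exacts [le_rfl, (hmax t ht).le]

lemma quadForm_le {x : ℍ} (hx : ‖x‖ = 1) : quadForm W x ≤ W t₀ :=
  sub_nonneg.1 <| (sub_quadForm_eq_sum hx W t₀).symm ▸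
    Finset.sum_nonneg fun t _ => sub_mul_piQ_sq_nonneg hmax t x

lemma eq_quatBasis_or_neg_of_quadForm_eq {x : ℍ} (hx : ‖x‖ = 1) (h : quadForm W x = W t₀) :
    x = quatBasis t₀ ∨ x = -quatBasis t₀ := by
  refine eq_quatBasis_or_neg_of_piQ_eq_zero hx fun t ht => ?_
  have hsum : ∑ t, (W t₀ - W t) * piQ t x ^ 2 = 0 := by
    rw [← sub_quadForm_eq_sum hx, h, sub_self]
  have hterm := (Finset.sum_eq_zero_iff_of_nonneg fun t _ => sub_mul_piQ_sq_nonneg hmax t x).1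
    hsum t (Finset.mem_univ t)
  exact pow_eq_zero_iff two_ne_zero |>.1 <|
    (mul_eq_zero.1 hterm).resolve_left (sub_ne_zero.2 (hmax t ht).ne')

end StrictMax

lemma IsMixed.ae_norm_eq_one {μ : Measure ℍ} (hμ : IsMixed μ) : ∀ᵐ x ∂μ, ‖x‖ = 1 := by
  have := hμ.1
  exact ae_iff.2 <| (prob_compl_eq_zero_iff <|
    measurableSet_eq_fun continuous_norm.measurable measurable_const).2 hμ.2

lemma IsMixed.integrable {μ : Measure ℍ} (hμ : IsMixed μ) {f : ℍ → ℝ} (hf : Continuous f) :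
    Integrable f μ := by
  have := hμ.1
  have hsphere : ∀ᵐ x ∂μ, x ∈ Metric.sphere (0 : ℍ) 1 := by
    simpa using hμ.ae_norm_eq_one
  rw [← Measure.restrict_eq_self_of_ae_mem hsphere]
  exact hf.continuousOn.integrableOn_compact (isCompact_sphere 0 1)

lemma isMixed_dirac {p : ℍ} (hp : ‖p‖ = 1) : IsMixed (Measure.dirac p) :=
  ⟨inferInstance, by simp [hp]⟩

lemma ae_eq_or_eq_neg_of_le_integral {W : Fin 4 → ℝ} {t₀ : Fin 4} (hmax : ∀ t ≠ t₀, W t < W t₀)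
    {μ : Measure ℍ} (hμ : IsMixed μ) (f : ℍ ≃ₗᵢ[ℝ] ℍ) (h : W t₀ ≤ ∫ x, quadForm W (f x) ∂μ) :
    ∀ᵐ x ∂μ, x = f.symm (quatBasis t₀) ∨ x = -f.symm (quatBasis t₀) := by
  have := hμ.1
  have hle : ∀ᵐ x ∂μ, quadForm W (f x) ≤ W t₀ := by
    filter_upwards [hμ.ae_norm_eq_one] with x hx
    exact quadForm_le hmax (by rw [f.norm_map, hx])
  have hint := hμ.integrable ((continuous_quadForm W).comp f.continuous)
  have heq : (fun x => quadForm W (f x)) =ᵐ[μ] fun _ => W t₀ := by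
    refine (integral_eq_iff_of_ae_le hint (integrable_const _) hle).1 (le_antisymm ?_ ?_)
    · simpa using integral_mono_ae hint (integrable_const _) hle
    · simpa using h
  filter_upwards [heq, hμ.ae_norm_eq_one] with x hx hnorm
  rw [← map_neg, f.eq_symm_apply, f.eq_symm_apply]
  exact eq_quatBasis_or_neg_of_quadForm_eq hmax (by rw [f.norm_map, hnorm]) hx

lemma stratEquiv_dirac_iff {ν : Measure ℍ} (hν : IsMixed ν) {p : ℍ} (hp : ‖p‖ = 1) :
    StratEquiv ν (Measure.dirac p) ↔ ∀ᵐ r ∂ν, r = p ∨ r = -p := by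
  have := hν.1
  constructor
  · intro h
    have hp' : ‖p⁻¹‖ = 1 := by rw [norm_inv, hp, inv_one]
    have hre := h p⁻¹ hp' 0
    set W : Fin 4 → ℝ := Pi.single 0 1
    have hmax : ∀ t ≠ 0, W t < W 0 := fun t ht => by simp [W, ht]
    have hW : ∀ x, quadForm W x = piQ 0 x ^ 2 := fun x => by simp [W, quadForm, Pi.single_apply]
    have hle : W 0 ≤ ∫ r, quadForm W (mulLeftIsometry ℝ p⁻¹ hp' r) ∂ν := by
      have hp0 : p ≠ 0 := ne_zero_of_norm_ne_zero (by rw [hp]; exact one_ne_zero)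
      simp only [hW, mulLeftIsometry_apply, hre, integral_dirac, inv_mul_cancel₀ hp0]
      simp [W, piQ, Quaternion.re_one]
    simpa [quatBasis] using ae_eq_or_eq_neg_of_le_integral hmax hν _ hle
  · intro h a _ t
    rw [integral_dirac, integral_congr_ae (g := fun _ => piQ t (a * p) ^ 2), integral_const]
    · simp
    filter_upwards [h] with r hr
    rcases hr with rfl | rfl <;> simp [piQ_neg]

lemma payoffM_of_ae_left {ν : Measure ℍ} [IsProbabilityMeasure ν] {p : ℍ}
    (h : ∀ᵐ r ∂ν, r = p ∨ r = -p) (Y : Fin 4 → ℝ) (μ : Measure ℍ) :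
    payoffM Y ν μ = ∫ q, quadForm Y (p * q) ∂μ := by
  rw [payoffM, integral_congr_ae (g := fun _ => ∫ q, quadForm Y (p * q) ∂μ), integral_const]
  · simp
  filter_upwards [h] with r hr
  rcases hr with rfl | rfl <;> simp [payoff_eq_quadForm, quadForm_neg]

lemma payoffM_of_ae_right {μ : Measure ℍ} [IsProbabilityMeasure μ] {q : ℍ}
    (h : ∀ᵐ r ∂μ, r = q ∨ r = -q) (X : Fin 4 → ℝ) (ν : Measure ℍ) :
    payoffM X ν μ = ∫ p, quadForm X (p * q) ∂ν := by
  refine integral_congr_ae (ae_of_all _ fun p => ?_)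
  dsimp only
  rw [integral_congr_ae (g := fun _ => quadForm X (p * q)), integral_const]
  · simp
  filter_upwards [h] with r hr
  rcases hr with rfl | rfl <;> simp [payoff_eq_quadForm, quadForm_neg]

namespace IsNash

variable {X Y : Fin 4 → ℝ} {ν μ : Measure ℍ}

lemma pure_right_of_pure_left (hnash : IsNash X Y ν μ) (hY : Injective Y) {p : ℍ} (hp : ‖p‖ = 1)
    (hν : StratEquiv ν (Measure.dirac p)) : ∃ q : ℍ, ‖q‖ = 1 ∧ StratEquiv μ (Measure.dirac q) := by
  obtain ⟨hνm, hμm, -, hbest⟩ := hnash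
  have := hνm.1
  obtain ⟨t₀, hmax⟩ := exists_forall_ne_lt_of_injective hY
  set f := mulLeftIsometry ℝ p hp
  have hq₀ : ‖f.symm (quatBasis t₀)‖ = 1 := by rw [f.symm.norm_map, norm_quatBasis]
  have hpay := payoffM_of_ae_left ((stratEquiv_dirac_iff hνm hp).1 hν) Y
  have hopt : quadForm Y (f (f.symm (quatBasis t₀))) ≤ ∫ q, quadForm Y (f q) ∂μ := by
    simpa only [hpay, integral_dirac, f, mulLeftIsometry_apply] using hbest _ (isMixed_dirac hq₀)
  rw [f.apply_symm_apply, quadForm_quatBasis] at hopt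
  exact ⟨_, hq₀, (stratEquiv_dirac_iff hμm hq₀).2 (ae_eq_or_eq_neg_of_le_integral hmax hμm f hopt)⟩

lemma pure_left_of_pure_right (hnash : IsNash X Y ν μ) (hX : Injective X) {q : ℍ} (hq : ‖q‖ = 1)
    (hμ : StratEquiv μ (Measure.dirac q)) : ∃ p : ℍ, ‖p‖ = 1 ∧ StratEquiv ν (Measure.dirac p) := by
  obtain ⟨hνm, hμm, hbest, -⟩ := hnash
  have := hμm.1
  obtain ⟨t₀, hmax⟩ := exists_forall_ne_lt_of_injective hX
  set f := mulRightIsometry ℝ q hq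
  have hp₀ : ‖f.symm (quatBasis t₀)‖ = 1 := by rw [f.symm.norm_map, norm_quatBasis]
  have hpay := payoffM_of_ae_right ((stratEquiv_dirac_iff hμm hq).1 hμ) X
  have hopt : quadForm X (f (f.symm (quatBasis t₀))) ≤ ∫ p, quadForm X (f p) ∂ν := by
    simpa only [hpay, integral_dirac, f, mulRightIsometry_apply] using hbest _ (isMixed_dirac hp₀)
  rw [f.apply_symm_apply, quadForm_quatBasis] at hopt
  exact ⟨_, hp₀, (stratEquiv_dirac_iff hνm hp₀).2 (ae_eq_or_eq_neg_of_le_integral hmax hνm f hopt)⟩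

end IsNash

/-- In a Nash equilibrium of a generic game, `ν` is equivalent to a Dirac
measure iff `μ` is. -/
theorem pure_iff_pure (X Y : Fin 4 → ℝ) (hG : Generic X Y)
    (ν μ : Measure ℍ) (hnash : IsNash X Y ν μ) :
    (∃ p : ℍ, ‖p‖ = 1 ∧ StratEquiv ν (Measure.dirac p)) ↔
      (∃ q : ℍ, ‖q‖ = 1 ∧ StratEquiv μ (Measure.dirac q)) :=
  ⟨fun ⟨_, hp, hν⟩ => hnash.pure_right_of_pure_left hG.2.1 hp hν,
    fun ⟨_, hq, hμ⟩ => hnash.pure_left_of_pure_right hG.1 hq hμ⟩
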